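/- arXiv:1501.04774 — 2 statements merged into one kernel-verified Lean document; each statement's English description precedes it below -/
import Mathlib

section
/- Let n ≥ 2 and consider n₁ = n₂ = n−1. Let S be the following finite set of ℝ-linear endomorphisms of B = ℝ[x₁,…,xₙ,y₁,…,yₙ]: f ↦ −x_i·∂f/∂x_r − y_i·∂f/∂y_r for 1 ≤ i < r ≤ n−1, and f ↦ −x_i·xₙ·f + y_i·yₙ·f for 1 ≤ i ≤ n−1. Let m₁, m₂ ∈ ℕ, set v = x_{n−1}^{m₁}·yₙ^{m₂}, and for k ∈ ℕ let W_k be the ℝ-linear span of all polynomials T₁(T₂(⋯T_j(v)⋯)) with 0 ≤ j ≤ k and T₁,…,T_j ∈ S. Then there exist real constants c₁, c₂ > 0 and K ∈ ℕ such that c₁·k^{n−1} ≤ dim W_k ≤ c₂·k^{n−1} for all k ≥ K. -/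
open MvPolynomial

/-- Multiplication by a polynomial, as an ℝ-linear endomorphism. -/
noncomputable def mulE {σ : Type} (a : MvPolynomial σ ℝ) :
    Module.End ℝ (MvPolynomial σ ℝ) := LinearMap.mulLeft ℝ a

/-- Formal partial derivative ∂/∂v, as an ℝ-linear endomorphism. -/
noncomputable def pdE {σ : Type} [DecidableEq σ] (v : σ) :
    Module.End ℝ (MvPolynomial σ ℝ) := (pderiv v).toLinearMap

/-- The set S of negative-root-vector endomorphisms for n₁ = n₂ = n−1
(x's are `Sum.inl`, y's `Sum.inr`, 0-based indexing: 1 ≤ i < r ≤ n−1 becomes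
i < r, r.val < n−1; xₙ, yₙ are the variables with `Fin n` index of value n−1). -/
def Sset (n : ℕ) (h : 2 ≤ n) : Set (Module.End ℝ (MvPolynomial (Fin n ⊕ Fin n) ℝ)) :=
  {T | (∃ i r : Fin n, i < r ∧ r.val < n - 1 ∧
          T = -(mulE (X (Sum.inl i)) * pdE (Sum.inl r))
                - mulE (X (Sum.inr i)) * pdE (Sum.inr r)) ∨
       (∃ i : Fin n, i.val < n - 1 ∧
          T = -mulE (X (Sum.inl i) * X (Sum.inl (⟨n - 1, by omega⟩ : Fin n)))
                + mulE (X (Sum.inr i) * X (Sum.inr (⟨n - 1, by omega⟩ : Fin n))))}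

/-- W_k: span of all T₁(T₂(⋯T_j(v)⋯)) with 0 ≤ j ≤ k, T's in S. -/
noncomputable def Wk (n : ℕ) (S : Set (Module.End ℝ (MvPolynomial (Fin n ⊕ Fin n) ℝ)))
    (v : MvPolynomial (Fin n ⊕ Fin n) ℝ) (k : ℕ) :
    Submodule ℝ (MvPolynomial (Fin n ⊕ Fin n) ℝ) :=
  Submodule.span ℝ
    {f | ∃ l : List (Module.End ℝ (MvPolynomial (Fin n ⊕ Fin n) ℝ)),
      l.length ≤ k ∧ (∀ T ∈ l, T ∈ S) ∧ f = l.prod v}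


namespace S14

variable (n : ℕ)

def lastI (hn : 2 ≤ n) : Fin n := ⟨n-1, by omega⟩
def em (hn : 2 ≤ n) (i : Fin (n-1)) : Fin n :=
  ⟨i.val, lt_of_lt_of_le i.isLt (Nat.sub_le n 1)⟩

variable (hn : 2 ≤ n) (m₁ m₂ : ℕ)

lemma em_ne_last (i : Fin (n-1)) : em n hn i ≠ lastI n hn := by
  have := i.isLt
  simp only [em, lastI, Ne, Fin.mk.injEq]
  omega

lemma em_inj : Function.Injective (em n hn) := by
  intro i j h
  simpa [em, Fin.ext_iff] using h

noncomputable def q (i : Fin (n-1)) : MvPolynomial (Fin n ⊕ Fin n) ℝ :=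
  -(X (Sum.inl (em n hn i)) * X (Sum.inl (lastI n hn))) +
    X (Sum.inr (em n hn i)) * X (Sum.inr (lastI n hn))

noncomputable def G (a α : Fin (n-1) → ℕ) : MvPolynomial (Fin n ⊕ Fin n) ℝ :=
  (∏ i, q n hn i ^ a i) *
  ((∏ j, X (Sum.inl (em n hn j)) ^ α j) * X (Sum.inr (lastI n hn)) ^ m₂)

noncomputable def V (k : ℕ) : Submodule ℝ (MvPolynomial (Fin n ⊕ Fin n) ℝ) :=
  Submodule.span ℝ {p | ∃ a α : Fin (n-1) → ℕ,
    (∑ i, a i) ≤ k ∧ (∑ j, α j) = m₁ ∧ p = G n hn m₂ a α}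

lemma V_mono : Monotone (V n hn m₁ m₂) := by
  intro k l hkl
  apply Submodule.span_mono
  rintro p ⟨a, α, ha, hα, rfl⟩
  exact ⟨a, α, ha.trans hkl, hα, rfl⟩

lemma G_mem_V {a α : Fin (n-1) → ℕ} {k : ℕ} (ha : (∑ i, a i) ≤ k)
    (hα : (∑ j, α j) = m₁) : G n hn m₂ a α ∈ V n hn m₁ m₂ k :=
  Submodule.subset_span ⟨a, α, ha, hα, rfl⟩

-- product bump lemma
lemma prod_pow_update {ι : Type*} [Fintype ι] [DecidableEq ι]
    {M : Type*} [CommMonoid M] (f : ι → M) (a : ι → ℕ) (i : ι) :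
    ∏ j, f j ^ (Function.update a i (a i + 1)) j = f i * ∏ j, f j ^ a j := by
  have h1 : ∀ j, f j ^ (Function.update a i (a i + 1)) j
      = Function.update (fun j => f j ^ a j) i (f i ^ (a i + 1)) j :=
    fun j => (Function.apply_update (fun j v => f j ^ v) a i _ j)
  rw [Finset.prod_congr rfl (fun j _ => h1 j),
    Finset.prod_update_of_mem (Finset.mem_univ i), Finset.sdiff_singleton_eq_erase,
    ← Finset.mul_prod_erase Finset.univ _ (Finset.mem_univ i), pow_succ]
  rw [mul_comm (f i ^ a i) (f i), mul_assoc]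


section Deriv

noncomputable def DA (i r : Fin n) :
    Derivation ℝ (MvPolynomial (Fin n ⊕ Fin n) ℝ) (MvPolynomial (Fin n ⊕ Fin n) ℝ) :=
  -((X (Sum.inl i) : MvPolynomial (Fin n ⊕ Fin n) ℝ) • pderiv (Sum.inl r))
    - ((X (Sum.inr i) : MvPolynomial (Fin n ⊕ Fin n) ℝ) • pderiv (Sum.inr r))

lemma DA_apply (i r : Fin n) (p : MvPolynomial (Fin n ⊕ Fin n) ℝ) :
    DA n i r p = -(X (Sum.inl i) * pderiv (Sum.inl r) p)
      - X (Sum.inr i) * pderiv (Sum.inr r) p := by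
  simp [DA, smul_eq_mul]

lemma D_prod_zero {ι : Type*} [DecidableEq ι]
    (D : Derivation ℝ (MvPolynomial (Fin n ⊕ Fin n) ℝ) (MvPolynomial (Fin n ⊕ Fin n) ℝ))
    {s : Finset ι} (g : ι → MvPolynomial (Fin n ⊕ Fin n) ℝ)
    (h : ∀ j ∈ s, D (g j) = 0) : D (∏ j ∈ s, g j) = 0 := by
  induction s using Finset.cons_induction with
  | empty => simpa using D.map_one_eq_zero
  | cons i s hi ih =>
    rw [Finset.prod_cons, D.leibniz, h i (Finset.mem_cons_self i s),
      ih (fun j hj => h j (Finset.mem_cons_of_mem hj))]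
    simp

lemma D_prod_pow {ι : Type*} [Fintype ι] [DecidableEq ι]
    (D : Derivation ℝ (MvPolynomial (Fin n ⊕ Fin n) ℝ) (MvPolynomial (Fin n ⊕ Fin n) ℝ))
    (f : ι → MvPolynomial (Fin n ⊕ Fin n) ℝ) (a : ι → ℕ) (r' : ι)
    (h : ∀ j, j ≠ r' → D (f j) = 0) :
    D (∏ j, f j ^ a j) =
      (a r' : MvPolynomial (Fin n ⊕ Fin n) ℝ) *
        ((∏ j, f j ^ (Function.update a r' (a r' - 1)) j) * D (f r')) := by
  have hz : D (∏ j ∈ Finset.univ.erase r', f j ^ a j) = 0 := by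
    apply D_prod_zero
    intro j hj
    rw [D.leibniz_pow, h j (Finset.ne_of_mem_erase hj)]
    simp
  have hupd : ∀ j, f j ^ (Function.update a r' (a r' - 1)) j
      = Function.update (fun j => f j ^ a j) r' (f r' ^ (a r' - 1)) j :=
    fun j => (Function.apply_update (fun j v => f j ^ v) a r' _ j)
  rw [← Finset.mul_prod_erase Finset.univ _ (Finset.mem_univ r'), D.leibniz, hz,
    D.leibniz_pow, Finset.prod_congr rfl (fun j _ => hupd j),
    Finset.prod_update_of_mem (Finset.mem_univ r'), Finset.sdiff_singleton_eq_erase]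
  simp only [smul_eq_mul, nsmul_eq_mul, smul_zero, add_zero]
  ring

end Deriv

lemma inl_last_ne_inl_r {r : Fin n} (hr : r.val < n - 1) :
    (Sum.inl (lastI n hn) : Fin n ⊕ Fin n) ≠ Sum.inl r := by
  simp only [lastI, Ne, Sum.inl.injEq, Fin.ext_iff]
  omega

lemma inr_last_ne_inr_r {r : Fin n} (hr : r.val < n - 1) :
    (Sum.inr (lastI n hn) : Fin n ⊕ Fin n) ≠ Sum.inr r := by
  simp only [lastI, Ne, Sum.inr.injEq, Fin.ext_iff]
  omega

lemma DA_q_ne (i r : Fin n) (hr : r.val < n - 1) (j : Fin (n-1))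
    (hjr : em n hn j ≠ r) : DA n i r (q n hn j) = 0 := by
  have h1 : (Sum.inl (em n hn j) : Fin n ⊕ Fin n) ≠ Sum.inl r := by simpa using hjr
  have h2 : (Sum.inr (em n hn j) : Fin n ⊕ Fin n) ≠ Sum.inr r := by simpa using hjr
  rw [DA_apply]
  simp [q, pderiv_mul, pderiv_X_of_ne h1, pderiv_X_of_ne h2,
    pderiv_X_of_ne (inl_last_ne_inl_r n hn hr), pderiv_X_of_ne (inr_last_ne_inr_r n hn hr)]

lemma DA_q_eq (i r : Fin n) (hr : r.val < n - 1) (hi : i.val < n - 1)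
    (j : Fin (n-1)) (hjr : em n hn j = r) :
    DA n i r (q n hn j) = -(q n hn ⟨i.val, hi⟩) := by
  have hemi : em n hn ⟨i.val, hi⟩ = i := rfl
  rw [DA_apply]
  simp only [q, hjr, hemi, map_add, map_neg, pderiv_mul, pderiv_X_self,
    pderiv_X_of_ne (inl_last_ne_inl_r n hn hr), pderiv_X_of_ne (inr_last_ne_inr_r n hn hr)]
  have h3 : (pderiv (Sum.inl r)) (X (Sum.inr r) : MvPolynomial (Fin n ⊕ Fin n) ℝ) = 0 :=
    pderiv_X_of_ne (by simp)
  have h4 : (pderiv (Sum.inl r)) (X (Sum.inr (lastI n hn)) : MvPolynomial (Fin n ⊕ Fin n) ℝ) = 0 :=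
    pderiv_X_of_ne (by simp)
  have h5 : (pderiv (Sum.inr r)) (X (Sum.inl r) : MvPolynomial (Fin n ⊕ Fin n) ℝ) = 0 :=
    pderiv_X_of_ne (by simp)
  have h6 : (pderiv (Sum.inr r)) (X (Sum.inl (lastI n hn)) : MvPolynomial (Fin n ⊕ Fin n) ℝ) = 0 :=
    pderiv_X_of_ne (by simp)
  rw [h3, h4, h5, h6]
  ring

lemma DA_Xr (i r : Fin n) (hr : r.val < n - 1) (j : Fin (n-1)) :
    DA n i r (X (Sum.inl (em n hn j)) : MvPolynomial (Fin n ⊕ Fin n) ℝ)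
      = if em n hn j = r then -(X (Sum.inl i)) else 0 := by
  rw [DA_apply]
  have h2 : (pderiv (Sum.inr r)) (X (Sum.inl (em n hn j)) : MvPolynomial (Fin n ⊕ Fin n) ℝ) = 0 :=
    pderiv_X_of_ne (by simp)
  rw [h2]
  by_cases h : em n hn j = r
  · rw [if_pos h, h, pderiv_X_self]; ring
  · rw [if_neg h, pderiv_X_of_ne (by simpa using h)]; ring

lemma DA_Cy (i r : Fin n) (hr : r.val < n - 1) :
    DA n i r ((X (Sum.inr (lastI n hn)) : MvPolynomial (Fin n ⊕ Fin n) ℝ) ^ m₂) = 0 := by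
  rw [Derivation.leibniz_pow, DA_apply]
  rw [pderiv_X_of_ne (by simp), pderiv_X_of_ne (inr_last_ne_inr_r n hn hr)]
  simp


-- sum helpers
lemma sum_update_eq {N : ℕ} (a : Fin N → ℕ) (i : Fin N) (b : ℕ) :
    ∑ j, Function.update a i b j = b + ∑ j ∈ Finset.univ.erase i, a j := by
  rw [Finset.sum_update_of_mem (Finset.mem_univ i), Finset.sdiff_singleton_eq_erase]

lemma sum_split {N : ℕ} (a : Fin N → ℕ) (i : Fin N) :
    ∑ j, a j = a i + ∑ j ∈ Finset.univ.erase i, a j :=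
  (Finset.add_sum_erase Finset.univ a (Finset.mem_univ i)).symm

/-- decrement at r', increment at i' -/
def bump {N : ℕ} (β : Fin N → ℕ) (r' i' : Fin N) : Fin N → ℕ :=
  Function.update (Function.update β r' (β r' - 1)) i'
    (Function.update β r' (β r' - 1) i' + 1)

lemma sum_bump {N : ℕ} (β : Fin N → ℕ) (r' i' : Fin N) (h : 1 ≤ β r') :
    ∑ j, bump β r' i' j = ∑ j, β j := by
  unfold bump
  set β₁ := Function.update β r' (β r' - 1) with hβ₁
  have h1 : ∑ j, Function.update β₁ i' (β₁ i' + 1) j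
      = (β₁ i' + 1) + ∑ j ∈ Finset.univ.erase i', β₁ j := sum_update_eq β₁ i' _
  have h2 : ∑ j, β₁ j = β₁ i' + ∑ j ∈ Finset.univ.erase i', β₁ j := sum_split β₁ i'
  have h3 : ∑ j, β₁ j = (β r' - 1) + ∑ j ∈ Finset.univ.erase r', β j := sum_update_eq β r' _
  have h4 : ∑ j, β j = β r' + ∑ j ∈ Finset.univ.erase r', β j := sum_split β r'
  omega

lemma A_step_key (i r : Fin n) (hir : i < r) (hr : r.val < n - 1)
    (hi : i.val < n - 1) (a α : Fin (n-1) → ℕ) :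
    DA n i r (G n hn m₂ a α) =
      -((α ⟨r.val, hr⟩ : MvPolynomial (Fin n ⊕ Fin n) ℝ) •
          G n hn m₂ a (bump α ⟨r.val, hr⟩ ⟨i.val, hi⟩))
      + -((a ⟨r.val, hr⟩ : MvPolynomial (Fin n ⊕ Fin n) ℝ) •
          G n hn m₂ (bump a ⟨r.val, hr⟩ ⟨i.val, hi⟩) α) := by
  have hem_r : em n hn ⟨r.val, hr⟩ = r := rfl
  have hem_i : em n hn ⟨i.val, hi⟩ = i := rfl
  have hDA : DA n i r (∏ j, q n hn j ^ a j) =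
      (a ⟨r.val, hr⟩ : MvPolynomial (Fin n ⊕ Fin n) ℝ) *
        ((∏ j, q n hn j ^ (Function.update a ⟨r.val, hr⟩ (a ⟨r.val, hr⟩ - 1)) j)
          * -(q n hn ⟨i.val, hi⟩)) := by
    rw [D_prod_pow n (DA n i r) _ a ⟨r.val, hr⟩
      (fun j hj => DA_q_ne n hn i r hr j (fun hc => hj (by
        apply em_inj n hn; rw [hc, hem_r])))]
    rw [DA_q_eq n hn i r hr hi ⟨r.val, hr⟩ hem_r]
  have hDB : DA n i r (∏ j, (X (Sum.inl (em n hn j)) : MvPolynomial (Fin n ⊕ Fin n) ℝ) ^ α j) =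
      (α ⟨r.val, hr⟩ : MvPolynomial (Fin n ⊕ Fin n) ℝ) *
        ((∏ j, (X (Sum.inl (em n hn j)) : MvPolynomial (Fin n ⊕ Fin n) ℝ)
            ^ (Function.update α ⟨r.val, hr⟩ (α ⟨r.val, hr⟩ - 1)) j)
          * -(X (Sum.inl i))) := by
    rw [D_prod_pow n (DA n i r) _ α ⟨r.val, hr⟩
      (fun j hj => by
        rw [DA_Xr n hn i r hr j, if_neg (fun hc => hj (by apply em_inj n hn; rw [hc, hem_r]))])]
    rw [DA_Xr n hn i r hr ⟨r.val, hr⟩, if_pos hem_r]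
  have e1 : ∏ j, q n hn j ^ (bump a ⟨r.val, hr⟩ ⟨i.val, hi⟩) j
      = q n hn ⟨i.val, hi⟩ *
        ∏ j, q n hn j ^ (Function.update a ⟨r.val, hr⟩ (a ⟨r.val, hr⟩ - 1)) j :=
    prod_pow_update _ _ _
  have e2 : ∏ j, (X (Sum.inl (em n hn j)) : MvPolynomial (Fin n ⊕ Fin n) ℝ)
        ^ (bump α ⟨r.val, hr⟩ ⟨i.val, hi⟩) j
      = X (Sum.inl (em n hn ⟨i.val, hi⟩)) *
        ∏ j, (X (Sum.inl (em n hn j)) : MvPolynomial (Fin n ⊕ Fin n) ℝ)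
          ^ (Function.update α ⟨r.val, hr⟩ (α ⟨r.val, hr⟩ - 1)) j :=
    prod_pow_update _ _ _
  unfold G
  rw [Derivation.leibniz, Derivation.leibniz, DA_Cy n hn m₂ i r hr, hDA, hDB, e1, e2, hem_i]
  simp only [smul_eq_mul, smul_zero, add_zero]
  ring


lemma cast_smul (c : ℕ) (x : MvPolynomial (Fin n ⊕ Fin n) ℝ) :
    (c : MvPolynomial (Fin n ⊕ Fin n) ℝ) • x = (c : ℝ) • x := by
  rw [smul_eq_mul, ← map_natCast (C : ℝ →+* MvPolynomial (Fin n ⊕ Fin n) ℝ) c,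
    ← MvPolynomial.smul_eq_C_mul]

lemma sum_update_add_one {N : ℕ} (a : Fin N → ℕ) (i : Fin N) :
    ∑ j, Function.update a i (a i + 1) j = (∑ j, a j) + 1 := by
  have h1 := sum_update_eq a i (a i + 1)
  have h2 := sum_split a i
  omega

lemma B_step (i' : Fin (n-1)) (a α : Fin (n-1) → ℕ) :
    q n hn i' * G n hn m₂ a α
      = G n hn m₂ (Function.update a i' (a i' + 1)) α := by
  unfold G
  rw [prod_pow_update (q n hn) a i', mul_assoc]

lemma S_maps {T : Module.End ℝ (MvPolynomial (Fin n ⊕ Fin n) ℝ)}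
    (hT : T ∈ Sset n hn) {k : ℕ} {p : MvPolynomial (Fin n ⊕ Fin n) ℝ}
    (hp : p ∈ V n hn m₁ m₂ k) : T p ∈ V n hn m₁ m₂ (k+1) := by
  induction hp using Submodule.span_induction with
  | mem x hx =>
    obtain ⟨a, α, ha, hα, rfl⟩ := hx
    rcases hT with ⟨i, r, hir, hr, rfl⟩ | ⟨i, hi, rfl⟩
    · have hi : i.val < n - 1 := by have := Fin.lt_def.mp hir; omega
      have hTp : ((-(mulE (X (Sum.inl i)) * pdE (Sum.inl r))
            - mulE (X (Sum.inr i)) * pdE (Sum.inr r) :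
              Module.End ℝ (MvPolynomial (Fin n ⊕ Fin n) ℝ))) (G n hn m₂ a α)
          = DA n i r (G n hn m₂ a α) := by
        rw [DA_apply]
        simp [mulE, pdE, Module.End.mul_apply]
      rw [hTp, A_step_key n hn m₂ i r hir hr hi a α]
      apply Submodule.add_mem
      · by_cases h0 : α ⟨r.val, hr⟩ = 0
        · rw [h0]; simp
        · apply Submodule.neg_mem
          rw [cast_smul]
          apply Submodule.smul_mem
          exact G_mem_V n hn m₁ m₂ (ha.trans (Nat.le_succ k))
            (by rw [sum_bump α _ _ (Nat.one_le_iff_ne_zero.mpr h0)]; exact hα)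
      · by_cases h0 : a ⟨r.val, hr⟩ = 0
        · rw [h0]; simp
        · apply Submodule.neg_mem
          rw [cast_smul]
          apply Submodule.smul_mem
          apply G_mem_V n hn m₁ m₂ _ hα
          rw [sum_bump a _ _ (Nat.one_le_iff_ne_zero.mpr h0)]
          exact ha.trans (Nat.le_succ k)
    · have hTp : ((-mulE (X (Sum.inl i) * X (Sum.inl (lastI n hn)))
            + mulE (X (Sum.inr i) * X (Sum.inr (lastI n hn))) :
              Module.End ℝ (MvPolynomial (Fin n ⊕ Fin n) ℝ))) (G n hn m₂ a α)
          = q n hn ⟨i.val, hi⟩ * G n hn m₂ a α := by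
        have hemi : em n hn ⟨i.val, hi⟩ = i := rfl
        simp only [mulE, LinearMap.add_apply, LinearMap.neg_apply, LinearMap.mulLeft_apply,
          q, hemi]
        ring
      show ((-mulE (X (Sum.inl i) * X (Sum.inl (lastI n hn)))
            + mulE (X (Sum.inr i) * X (Sum.inr (lastI n hn))) :
              Module.End ℝ (MvPolynomial (Fin n ⊕ Fin n) ℝ))) (G n hn m₂ a α)
          ∈ V n hn m₁ m₂ (k+1)
      rw [hTp, B_step n hn m₂ ⟨i.val, hi⟩ a α]
      apply G_mem_V n hn m₁ m₂ _ hα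
      rw [sum_update_add_one]
      omega
  | zero => rw [map_zero]; exact Submodule.zero_mem _
  | add x y _ _ hx hy => rw [map_add]; exact Submodule.add_mem _ hx hy
  | smul c x _ hx => rw [map_smul]; exact Submodule.smul_mem _ _ hx

lemma word_mem (l : List (Module.End ℝ (MvPolynomial (Fin n ⊕ Fin n) ℝ)))
    (hl : ∀ T ∈ l, T ∈ Sset n hn) {k : ℕ} {p : MvPolynomial (Fin n ⊕ Fin n) ℝ}
    (hp : p ∈ V n hn m₁ m₂ k) : l.prod p ∈ V n hn m₁ m₂ (k + l.length) := by
  induction l with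
  | nil => simpa using hp
  | cons T l ih =>
    have h1 : (T :: l).prod p = T (l.prod p) := by
      rw [List.prod_cons]; rfl
    rw [h1]
    have h2 := S_maps n hn m₁ m₂ (hl T List.mem_cons_self)
      (ih (fun T' hT' => hl T' (List.mem_cons_of_mem _ hT')))
    apply V_mono n hn m₁ m₂ _ h2
    simp


def α₀ : Fin (n-1) → ℕ := fun j => if j = (⟨n-2, by omega⟩ : Fin (n-1)) then m₁ else 0

lemma sum_α₀ : ∑ j, α₀ n hn m₁ j = m₁ := by
  simp [α₀, Finset.sum_ite_eq']

lemma v_eq : (X (Sum.inl (⟨n - 2, Nat.sub_lt (by omega) (by omega)⟩ : Fin n)) ^ m₁ *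
      X (Sum.inr (⟨n - 1, by omega⟩ : Fin n)) ^ m₂ : MvPolynomial (Fin n ⊕ Fin n) ℝ)
    = G n hn m₂ 0 (α₀ n hn m₁) := by
  unfold G α₀
  have h1 : ∏ i, q n hn i ^ (0 : Fin (n-1) → ℕ) i = 1 := by simp
  have h2 : ∏ j, (X (Sum.inl (em n hn j)) : MvPolynomial (Fin n ⊕ Fin n) ℝ)
        ^ (if j = (⟨n-2, by omega⟩ : Fin (n-1)) then m₁ else 0)
      = X (Sum.inl (em n hn ⟨n-2, by omega⟩)) ^ m₁ := by
    rw [Finset.prod_eq_single (⟨n-2, by omega⟩ : Fin (n-1))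
      (fun b _ hb => by rw [if_neg hb, pow_zero])
      (fun h => absurd (Finset.mem_univ _) h), if_pos rfl]
  rw [h1, h2, one_mul]
  rfl

lemma Wk_le_V (k : ℕ) :
    Wk n (Sset n hn) (X (Sum.inl (⟨n - 2, Nat.sub_lt (by omega) (by omega)⟩ : Fin n)) ^ m₁ *
      X (Sum.inr (⟨n - 1, by omega⟩ : Fin n)) ^ m₂) k ≤ V n hn m₁ m₂ k := by
  rw [Wk, Submodule.span_le]
  rintro f ⟨l, hlen, hmem, rfl⟩
  have h0 : G n hn m₂ 0 (α₀ n hn m₁) ∈ V n hn m₁ m₂ 0 :=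
    G_mem_V n hn m₁ m₂ (by simp) (sum_α₀ n hn m₁)
  have h1 := word_mem n hn m₁ m₂ l hmem h0
  rw [v_eq n hn m₁ m₂]
  exact V_mono n hn m₁ m₂ (by omega : 0 + l.length ≤ k) h1

noncomputable def Fk (k : ℕ) : Finset ((Fin (n-1) → ℕ) × (Fin (n-1) → ℕ)) :=
  (Fintype.piFinset fun _ => Finset.range (k+1)) ×ˢ (Fintype.piFinset fun _ => Finset.range (m₁+1))

lemma V_le_span (k : ℕ) :
    V n hn m₁ m₂ k ≤ Submodule.span ℝ
      (((Fk n m₁ k).image (fun p => G n hn m₂ p.1 p.2) : Finset (MvPolynomial (Fin n ⊕ Fin n) ℝ)) :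
        Set (MvPolynomial (Fin n ⊕ Fin n) ℝ)) := by
  apply Submodule.span_mono
  rintro p ⟨a, α, ha, hα, rfl⟩
  simp only [Finset.coe_image, Set.mem_image, Finset.mem_coe]
  refine ⟨(a, α), ?_, rfl⟩
  simp only [Fk, Finset.mem_product, Fintype.mem_piFinset, Finset.mem_range]
  constructor
  · intro i
    have : a i ≤ ∑ j, a j := Finset.single_le_sum (fun j _ => Nat.zero_le _) (Finset.mem_univ i)
    omega
  · intro i
    have : α i ≤ ∑ j, α j := Finset.single_le_sum (fun j _ => Nat.zero_le _) (Finset.mem_univ i)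
    omega

lemma card_Fk (k : ℕ) : (Fk n m₁ k).card = (k+1)^(n-1) * (m₁+1)^(n-1) := by
  simp [Fk, Fintype.card_piFinset]


lemma Wk_le_span (k : ℕ) :
    Wk n (Sset n hn) (X (Sum.inl (⟨n - 2, Nat.sub_lt (by omega) (by omega)⟩ : Fin n)) ^ m₁ *
      X (Sum.inr (⟨n - 1, by omega⟩ : Fin n)) ^ m₂) k
    ≤ Submodule.span ℝ
      (((Fk n m₁ k).image (fun p => G n hn m₂ p.1 p.2) : Finset (MvPolynomial (Fin n ⊕ Fin n) ℝ)) :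
        Set (MvPolynomial (Fin n ⊕ Fin n) ℝ)) :=
  (Wk_le_V n hn m₁ m₂ k).trans (V_le_span n hn m₁ m₂ k)

lemma fd_Wk (k : ℕ) :
    FiniteDimensional ℝ (Wk n (Sset n hn) (X (Sum.inl (⟨n - 2, Nat.sub_lt (by omega) (by omega)⟩ : Fin n)) ^ m₁ *
      X (Sum.inr (⟨n - 1, by omega⟩ : Fin n)) ^ m₂) k) :=
  Submodule.finiteDimensional_of_le (Wk_le_span n hn m₁ m₂ k)

lemma finrank_Wk_le (k : ℕ) :
    Module.finrank ℝ (Wk n (Sset n hn) (X (Sum.inl (⟨n - 2, Nat.sub_lt (by omega) (by omega)⟩ : Fin n)) ^ m₁ *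
      X (Sum.inr (⟨n - 1, by omega⟩ : Fin n)) ^ m₂) k)
    ≤ (k+1)^(n-1) * (m₁+1)^(n-1) := by
  set s := (Fk n m₁ k).image (fun p => G n hn m₂ p.1 p.2) with hs
  calc Module.finrank ℝ (Wk n (Sset n hn) _ k)
      ≤ Module.finrank ℝ (Submodule.span ℝ (s : Set (MvPolynomial (Fin n ⊕ Fin n) ℝ))) :=
        Submodule.finrank_mono (Wk_le_span n hn m₁ m₂ k)
    _ ≤ s.card := finrank_span_finset_le_card s
    _ ≤ (Fk n m₁ k).card := Finset.card_image_le
    _ = (k+1)^(n-1) * (m₁+1)^(n-1) := card_Fk n m₁ k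

lemma mulE_mul (a b : MvPolynomial (Fin n ⊕ Fin n) ℝ) :
    mulE a * mulE b = mulE (a * b) := by
  apply LinearMap.ext
  intro p
  simp [mulE, Module.End.mul_apply, mul_assoc]

lemma mulE_one : mulE (1 : MvPolynomial (Fin n ⊕ Fin n) ℝ) = 1 := by
  apply LinearMap.ext
  intro p
  simp [mulE]

lemma prod_map_mulE (l : List (MvPolynomial (Fin n ⊕ Fin n) ℝ)) :
    (l.map mulE).prod = mulE l.prod := by
  induction l with
  | nil => simpa using (mulE_one n).symm
  | cons a l ih => rw [List.map_cons, List.prod_cons, List.prod_cons, ih, mulE_mul]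

lemma mulE_pow (a : MvPolynomial (Fin n ⊕ Fin n) ℝ) (k : ℕ) :
    (mulE a) ^ k = mulE (a ^ k) := by
  induction k with
  | zero => simpa using (mulE_one n).symm
  | succ k ih => rw [pow_succ, pow_succ, ih, mulE_mul]

lemma qop_mem (i' : Fin (n-1)) : mulE (q n hn i') ∈ Sset n hn := by
  right
  refine ⟨em n hn i', i'.isLt, ?_⟩
  apply LinearMap.ext
  intro p
  have hl : (⟨n - 1, by omega⟩ : Fin n) = lastI n hn := rfl
  simp only [hl, mulE, LinearMap.add_apply, LinearMap.neg_apply, LinearMap.mulLeft_apply, q]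
  ring

lemma qpow_mem_Wk {a : Fin (n-1) → ℕ} {k : ℕ} (ha : ∑ i, a i ≤ k) :
    G n hn m₂ a (α₀ n hn m₁) ∈ Wk n (Sset n hn)
      (X (Sum.inl (⟨n - 2, Nat.sub_lt (by omega) (by omega)⟩ : Fin n)) ^ m₁ *
        X (Sum.inr (⟨n - 1, by omega⟩ : Fin n)) ^ m₂) k := by
  apply Submodule.subset_span
  refine ⟨(List.ofFn (fun i => List.replicate (a i) (mulE (q n hn i)))).flatten, ?_, ?_, ?_⟩
  · rw [List.length_flatten, List.map_ofFn]
    simp only [Function.comp_def, List.length_replicate]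
    rw [List.sum_ofFn]
    exact ha
  · intro T hT
    rw [List.mem_flatten] at hT
    obtain ⟨l', hl', hTl'⟩ := hT
    rw [List.mem_ofFn] at hl'
    obtain ⟨i, rfl⟩ := hl'
    rw [List.eq_of_mem_replicate hTl']
    exact qop_mem n hn i
  · have hprod : (List.ofFn (fun i => List.replicate (a i) (mulE (q n hn i)))).flatten.prod
        = mulE (∏ i, q n hn i ^ a i) := by
      rw [List.prod_flatten, List.map_ofFn]
      simp only [Function.comp_def, List.prod_replicate, mulE_pow n]
      have hc : (fun x => mulE (q n hn x ^ a x)) = mulE ∘ (fun i => q n hn i ^ a i) := rfl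
      rw [hc, ← List.map_ofFn (f := fun i => q n hn i ^ a i) (g := mulE), prod_map_mulE n, List.prod_ofFn]
    rw [hprod, v_eq n hn m₁ m₂]
    show G n hn m₂ a (α₀ n hn m₁) = mulE (∏ i, q n hn i ^ a i) (G n hn m₂ 0 (α₀ n hn m₁))
    simp only [mulE, LinearMap.mulLeft_apply, G]
    have h1 : ∏ i, q n hn i ^ (0 : Fin (n-1) → ℕ) i = 1 := by simp
    rw [h1]
    ring


noncomputable def uu : Fin n ⊕ Fin n → MvPolynomial (Fin n ⊕ Fin n) ℝ :=
  fun s => if s = Sum.inl (lastI n hn) then 0 else X s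

noncomputable def dexp (a : Fin (n-1) → ℕ) : (Fin n ⊕ Fin n) →₀ ℕ :=
  Finsupp.equivFunOnFinite.symm (Sum.elim
    (fun j : Fin n => if j = (⟨n-2, Nat.sub_lt (by omega) (by omega)⟩ : Fin n) then m₁ else 0)
    (fun j : Fin n => if h : j.val < n-1 then a ⟨j.val, h⟩ else (∑ i, a i) + m₂))

lemma dexp_inj : Function.Injective (dexp n hn m₁ m₂) := by
  intro a b h
  funext i
  have h2 : dexp n hn m₁ m₂ a (Sum.inr (em n hn i)) = dexp n hn m₁ m₂ b (Sum.inr (em n hn i)) := by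
    rw [h]
  simp only [dexp, Finsupp.equivFunOnFinite_symm_apply_apply, Sum.elim_inr] at h2
  have hlt : ((em n hn i) : Fin n).val < n - 1 := i.isLt
  rw [dif_pos hlt, dif_pos hlt] at h2
  exact h2

lemma phi_G (a : Fin (n-1) → ℕ) :
    aeval (uu n hn) (G n hn m₂ a (α₀ n hn m₁)) = monomial (dexp n hn m₁ m₂ a) 1 := by
  -- left side
  have hq : ∀ i : Fin (n-1), aeval (uu n hn) (q n hn i)
      = X (Sum.inr (em n hn i)) * X (Sum.inr (lastI n hn)) := by
    intro i
    simp only [q, map_add, map_neg, map_mul, aeval_X, uu]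
    simp [em_ne_last n hn i]
  have hXl : ∀ j : Fin (n-1), aeval (uu n hn) (X (Sum.inl (em n hn j)) :
      MvPolynomial (Fin n ⊕ Fin n) ℝ) = X (Sum.inl (em n hn j)) := by
    intro j
    rw [aeval_X, uu, if_neg (by simpa using em_ne_last n hn j)]
  have hXr : aeval (uu n hn) (X (Sum.inr (lastI n hn)) :
      MvPolynomial (Fin n ⊕ Fin n) ℝ) = X (Sum.inr (lastI n hn)) := by
    rw [aeval_X, uu, if_neg (by simp)]
  have lhs : aeval (uu n hn) (G n hn m₂ a (α₀ n hn m₁))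
      = (∏ i, (X (Sum.inr (em n hn i)) : MvPolynomial (Fin n ⊕ Fin n) ℝ) ^ a i) *
          X (Sum.inr (lastI n hn)) ^ (∑ i, a i) *
          ((∏ j, (X (Sum.inl (em n hn j)) : MvPolynomial (Fin n ⊕ Fin n) ℝ) ^ α₀ n hn m₁ j) *
            X (Sum.inr (lastI n hn)) ^ m₂) := by
    unfold G
    simp_rw [map_mul, map_prod, map_pow, hq, hXl, hXr, mul_pow, Finset.prod_mul_distrib,
      Finset.prod_pow_eq_pow_sum]
  rw [lhs]
  -- right side
  rw [monomial_eq, C_1, one_mul,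
    Finsupp.prod_fintype _ _ (fun s => pow_zero _)]
  have hsum : ∀ s : Fin n ⊕ Fin n, dexp n hn m₁ m₂ a s = Sum.elim
      (fun j : Fin n => if j = (⟨n-2, Nat.sub_lt (by omega) (by omega)⟩ : Fin n) then m₁ else 0)
      (fun j : Fin n => if h : j.val < n-1 then a ⟨j.val, h⟩ else (∑ i, a i) + m₂) s := by
    intro s
    rfl
  simp_rw [hsum]
  rw [Fintype.prod_sum_type]
  have hL : ∏ j : Fin n, (X (Sum.inl j) : MvPolynomial (Fin n ⊕ Fin n) ℝ) ^
        (Sum.elim (fun j : Fin n => if j = (⟨n-2, Nat.sub_lt (by omega) (by omega)⟩ : Fin n) then m₁ else 0)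
          (fun j : Fin n => if h : j.val < n-1 then a ⟨j.val, h⟩ else (∑ i, a i) + m₂)
          (Sum.inl j))
      = X (Sum.inl (⟨n-2, Nat.sub_lt (by omega) (by omega)⟩ : Fin n)) ^ m₁ := by
    simp only [Sum.elim_inl]
    rw [Finset.prod_eq_single (⟨n-2, Nat.sub_lt (by omega) (by omega)⟩ : Fin n)
      (fun b _ hb => by rw [if_neg hb, pow_zero])
      (fun h => absurd (Finset.mem_univ _) h), if_pos rfl]
  have hR : ∏ j : Fin n, (X (Sum.inr j) : MvPolynomial (Fin n ⊕ Fin n) ℝ) ^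
        (Sum.elim (fun j : Fin n => if j = (⟨n-2, Nat.sub_lt (by omega) (by omega)⟩ : Fin n) then m₁ else 0)
          (fun j : Fin n => if h : j.val < n-1 then a ⟨j.val, h⟩ else (∑ i, a i) + m₂)
          (Sum.inr j))
      = X (Sum.inr (lastI n hn)) ^ ((∑ i, a i) + m₂) *
          ∏ i : Fin (n-1), (X (Sum.inr (em n hn i)) : MvPolynomial (Fin n ⊕ Fin n) ℝ) ^ a i := by
    simp only [Sum.elim_inr]
    rw [← Finset.mul_prod_erase Finset.univ _ (Finset.mem_univ (lastI n hn))]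
    congr 1
    · rw [dif_neg (show ¬((lastI n hn : Fin n).val < n - 1) by
        have : (lastI n hn : Fin n).val = n - 1 := rfl
        omega)]
    · have himg : Finset.univ.erase (lastI n hn) = Finset.image (em n hn) Finset.univ := by
        ext j
        simp only [Finset.mem_erase, Finset.mem_univ, and_true, Finset.mem_image, true_and]
        constructor
        · intro hj
          have hjv : j.val < n - 1 := by
            have := j.isLt
            simp only [Ne, Fin.ext_iff, lastI] at hj
            omega
          exact ⟨⟨j.val, hjv⟩, rfl⟩
        · rintro ⟨i, rfl⟩
          exact em_ne_last n hn i
      rw [himg, Finset.prod_image (fun i _ j _ h => em_inj n hn h)]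
      apply Finset.prod_congr rfl
      intro i _
      have hlt : ((em n hn i) : Fin n).val < n - 1 := i.isLt
      rw [dif_pos hlt]
      exact rfl
  rw [hL, hR]
  -- match up
  have hα : ∏ j, (X (Sum.inl (em n hn j)) : MvPolynomial (Fin n ⊕ Fin n) ℝ) ^ α₀ n hn m₁ j
      = X (Sum.inl (em n hn ⟨n-2, by omega⟩)) ^ m₁ := by
    unfold α₀
    rw [Finset.prod_eq_single (⟨n-2, by omega⟩ : Fin (n-1))
      (fun b _ hb => by rw [if_neg hb, pow_zero])
      (fun h => absurd (Finset.mem_univ _) h), if_pos rfl]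
  rw [hα]
  have he : em n hn ⟨n-2, by omega⟩ = (⟨n-2, Nat.sub_lt (by omega) (by omega)⟩ : Fin n) := rfl
  rw [he, pow_add]
  ring


lemma lindep (k : ℕ) :
    LinearIndependent ℝ (fun (t : Fin (n-1) → Fin (k/(n-1)+1)) =>
      G n hn m₂ (fun i => (t i : ℕ)) (α₀ n hn m₁)) := by
  apply LinearIndependent.of_comp (aeval (uu n hn)).toLinearMap
  have he : (⇑(aeval (uu n hn)).toLinearMap ∘ fun (t : Fin (n-1) → Fin (k/(n-1)+1)) =>
        G n hn m₂ (fun i => (t i : ℕ)) (α₀ n hn m₁))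
      = (basisMonomials (Fin n ⊕ Fin n) ℝ) ∘
          (fun (t : Fin (n-1) → Fin (k/(n-1)+1)) => dexp n hn m₁ m₂ (fun i => (t i : ℕ))) := by
    funext t
    rw [coe_basisMonomials]
    exact phi_G n hn m₁ m₂ _
  rw [he]
  apply LinearIndependent.comp (basisMonomials (Fin n ⊕ Fin n) ℝ).linearIndependent
  intro t t' h
  have h2 := dexp_inj n hn m₁ m₂ h
  funext i
  exact Fin.ext (congrFun h2 i)

lemma card_le_finrank (k : ℕ) :
    (k/(n-1)+1)^(n-1) ≤ Module.finrank ℝ (Wk n (Sset n hn)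
      (X (Sum.inl (⟨n - 2, Nat.sub_lt (by omega) (by omega)⟩ : Fin n)) ^ m₁ *
        X (Sum.inr (⟨n - 1, by omega⟩ : Fin n)) ^ m₂) k) := by
  haveI := fd_Wk n hn m₁ m₂ k
  set Wsub := Wk n (Sset n hn)
      (X (Sum.inl (⟨n - 2, Nat.sub_lt (by omega) (by omega)⟩ : Fin n)) ^ m₁ *
        X (Sum.inr (⟨n - 1, by omega⟩ : Fin n)) ^ m₂) k with hW
  have hmem : ∀ t : Fin (n-1) → Fin (k/(n-1)+1),
      G n hn m₂ (fun i => (t i : ℕ)) (α₀ n hn m₁) ∈ Wsub := by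
    intro t
    apply qpow_mem_Wk n hn m₁ m₂
    calc ∑ i, (t i : ℕ) ≤ Finset.univ.card • (k/(n-1)) := by
          apply Finset.sum_le_card_nsmul
          intro i _
          exact Nat.lt_succ_iff.mp (t i).isLt
      _ = (n-1) * (k/(n-1)) := by
          rw [Finset.card_univ, Fintype.card_fin, smul_eq_mul]
      _ ≤ k := by rw [mul_comm]; exact Nat.div_mul_le_self k (n-1)
  let fhat : (Fin (n-1) → Fin (k/(n-1)+1)) → Wsub :=
    fun t => ⟨G n hn m₂ (fun i => (t i : ℕ)) (α₀ n hn m₁), hmem t⟩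
  have hli : LinearIndependent ℝ fhat := by
    apply LinearIndependent.of_comp Wsub.subtype
    have : ⇑Wsub.subtype ∘ fhat
        = fun t => G n hn m₂ (fun i => (t i : ℕ)) (α₀ n hn m₁) := rfl
    rw [this]
    exact lindep n hn m₁ m₂ k
  have hcard := hli.fintype_card_le_finrank
  rwa [Fintype.card_fun, Fintype.card_fin, Fintype.card_fin] at hcard

end S14

/-- v = x_{n−1}^{m₁} yₙ^{m₂} (0-based: x-index n−2, y-index n−1). -/
theorem stmt_14 (n m₁ m₂ : ℕ) (hn : 2 ≤ n) :
    ∃ c₁ c₂ : ℝ, 0 < c₁ ∧ 0 < c₂ ∧ ∃ K : ℕ, ∀ k ≥ K,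
      c₁ * (k : ℝ) ^ (n - 1) ≤
        (Module.finrank ℝ (Wk n (Sset n hn)
          (X (Sum.inl (⟨n - 2, by omega⟩ : Fin n)) ^ m₁ *
            X (Sum.inr (⟨n - 1, by omega⟩ : Fin n)) ^ m₂) k) : ℝ) ∧
      (Module.finrank ℝ (Wk n (Sset n hn)
          (X (Sum.inl (⟨n - 2, by omega⟩ : Fin n)) ^ m₁ *
            X (Sum.inr (⟨n - 1, by omega⟩ : Fin n)) ^ m₂) k) : ℝ) ≤
        c₂ * (k : ℝ) ^ (n - 1) := by
  have hn1 : (0:ℝ) < (n:ℝ) - 1 := by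
    have : (2:ℝ) ≤ (n:ℝ) := by exact_mod_cast hn
    linarith
  refine ⟨((n:ℝ)-1)⁻¹ ^ (n-1), 2^(n-1) * ((m₁:ℝ)+1)^(n-1), ?_, ?_, 1, ?_⟩
  · positivity
  · positivity
  intro k hk
  have hk1 : (1:ℝ) ≤ (k:ℝ) := by exact_mod_cast hk
  constructor
  · -- lower bound
    have h1 := S14.card_le_finrank n hn m₁ m₂ k
    have h1' : (((k/(n-1)+1 : ℕ) : ℝ))^(n-1) ≤ (Module.finrank ℝ (Wk n (Sset n hn)
        (X (Sum.inl (⟨n - 2, by omega⟩ : Fin n)) ^ m₁ *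
          X (Sum.inr (⟨n - 1, by omega⟩ : Fin n)) ^ m₂) k) : ℝ) := by
      exact_mod_cast h1
    refine le_trans ?_ h1'
    rw [← mul_pow]
    apply pow_le_pow_left₀ (by positivity)
    -- base : (n-1)⁻¹ * k ≤ ↑(k/(n-1)) + 1
    have hnat : k < (k/(n-1) + 1) * (n-1) := by
      have h2 := Nat.div_add_mod k (n-1)
      have h3 : k % (n-1) < n - 1 := Nat.mod_lt _ (by omega)
      rw [add_mul, one_mul]
      set t := (n-1) * (k/(n-1)) with ht
      have ht2 : (k/(n-1)) * (n-1) = t := by rw [ht, mul_comm]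
      omega
    have hreal : (k:ℝ) ≤ ((k/(n-1) : ℕ) : ℝ) * ((n:ℝ)-1) + ((n:ℝ)-1) := by
      have : ((k:ℕ):ℝ) ≤ (((k/(n-1) + 1) * (n-1) : ℕ) : ℝ) := by
        exact_mod_cast hnat.le
      push_cast at this
      have hcast : ((n - 1 : ℕ) : ℝ) = (n:ℝ) - 1 := by
        have : (1:ℕ) ≤ n := by omega
        push_cast [this]
        ring
      rw [hcast] at this
      nlinarith [this]
    rw [inv_mul_le_iff₀ hn1]
    push_cast
    nlinarith [hreal, hn1]
  · -- upper bound
    have h2 := S14.finrank_Wk_le n hn m₁ m₂ k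
    have h2' : (Module.finrank ℝ (Wk n (Sset n hn)
        (X (Sum.inl (⟨n - 2, by omega⟩ : Fin n)) ^ m₁ *
          X (Sum.inr (⟨n - 1, by omega⟩ : Fin n)) ^ m₂) k) : ℝ)
        ≤ (((k+1)^(n-1) * (m₁+1)^(n-1) : ℕ) : ℝ) := by exact_mod_cast h2
    refine h2'.trans ?_
    push_cast
    have hb : ((k:ℝ)+1)^(n-1) ≤ (2*(k:ℝ))^(n-1) := by
      apply pow_le_pow_left₀ (by positivity)
      linarith
    calc ((k:ℝ)+1)^(n-1) * ((m₁:ℝ)+1)^(n-1)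
        ≤ (2*(k:ℝ))^(n-1) * ((m₁:ℝ)+1)^(n-1) := by
          apply mul_le_mul_of_nonneg_right hb (by positivity)
      _ = 2^(n-1) * ((m₁:ℝ)+1)^(n-1) * (k:ℝ)^(n-1) := by
          rw [mul_pow]; ring
end

section
/- Let n ≥ 3 and consider n₁ = n₂ = n−1. Let S be the following finite set of ℝ-linear endomorphisms of B = ℝ[x₁,…,xₙ,y₁,…,yₙ]: f ↦ −x_i·∂f/∂x_r − y_i·∂f/∂y_r for 1 ≤ i < r ≤ n−1, and f ↦ −x_i·xₙ·f + y_i·yₙ·f for 1 ≤ i ≤ n−1. Let m₁, m₂ ∈ ℕ, let ζ₁ = x_{n−2}·y_{n−1} − x_{n−1}·y_{n−2}, set v = x_{n−1}^{m₁}·ζ₁^{m₂+1}, and for k ∈ ℕ let W_k be the ℝ-linear span of all polynomials T₁(T₂(⋯T_j(v)⋯)) with 0 ≤ j ≤ k and T₁,…,T_j ∈ S. Then there exist real constants c₁, c₂ > 0 and K ∈ ℕ such that c₁·k^{n−1} ≤ dim W_k ≤ c₂·k^{n−1} for all k ≥ K. -/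
/-!
Write `bᵢ = -xᵢxₙ + yᵢyₙ` (`i < n - 1`) for the polynomials by which the multiplication operators
of `S` act, and `L = span {1, b₁, …, bₙ₋₁}`. The derivation operators of `S` kill `xₙ, yₙ`, send
every `bⱼ` into `L` and preserve homogeneity, so by the Leibniz rule `W_k ⊆ L^k · D`, where `D` is
the finite-dimensional space of forms of degree `deg v`. Conversely the multiplication operators
give `L^k · v ⊆ W_k`. Hence `dim L^k ≤ dim W_k ≤ dim L^k · dim D`. The substitution `xₙ ↦ -1`,
`yₙ ↦ 0` turns the `bᵢ` into independent variables, so evaluation at `b` maps the polynomials in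
`n - 1` variables of partial degrees `≤ k / (n - 1)` injectively into `L^k`, and those of partial
degrees `≤ k` onto a space containing `L^k`. These have dimensions `(k / (n - 1) + 1) ^ (n - 1)` and
`(k + 1) ^ (n - 1)`.
-/

open MvPolynomial

/-- ζ₁ = x_{n−2} y_{n−1} − x_{n−1} y_{n−2} (0-based indices n−3 and n−2). -/
noncomputable def zeta1 (n : ℕ) (h : 3 ≤ n) : MvPolynomial (Fin n ⊕ Fin n) ℝ :=
  X (Sum.inl (⟨n - 3, by omega⟩ : Fin n)) * X (Sum.inr (⟨n - 2, by omega⟩ : Fin n)) -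
    X (Sum.inl (⟨n - 2, by omega⟩ : Fin n)) * X (Sum.inr (⟨n - 3, by omega⟩ : Fin n))

namespace Submodule

variable {R A : Type*} [CommSemiring R] [CommSemiring A] [Algebra R A]

theorem prod_pow_mem_pow {ι : Type*} (M : Submodule R A) (s : Finset ι) {x : ι → A}
    (hx : ∀ i ∈ s, x i ∈ M) (e : ι → ℕ) : ∏ i ∈ s, x i ^ e i ∈ M ^ ∑ i ∈ s, e i := by
  classical
  induction s using Finset.induction with
  | empty => simpa using mem_one.mpr ⟨1, map_one _⟩
  | insert a s ha ih =>
    rw [Finset.prod_insert ha, Finset.sum_insert ha, pow_add]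
    exact mul_mem_mul (pow_mem_pow _ (hx a (Finset.mem_insert_self a s)) _)
      (ih fun i hi => hx i (Finset.mem_insert_of_mem hi))

instance {P Q : Submodule R A} [Module.Finite R P] [Module.Finite R Q] :
    Module.Finite R ↥(P * Q) :=
  Module.Finite.iff_fg.mpr ((Module.Finite.iff_fg.mp ‹_›).mul (Module.Finite.iff_fg.mp ‹_›))

theorem finrank_mul_le {K A : Type*} [Field K] [CommRing A] [Algebra K A] (P Q : Submodule K A)
    [FiniteDimensional K P] [FiniteDimensional K Q] :
    Module.finrank K ↥(P * Q) ≤ Module.finrank K P * Module.finrank K Q := by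
  rw [← mulMap_range, ← Module.finrank_tensorProduct]
  exact LinearMap.finrank_range_le _

end Submodule

namespace Derivation

variable {R A : Type*} [CommRing R] [CommRing A] [Algebra R A] (D : Derivation R A A)
  {P Q : Submodule R A}

theorem map_mem_mul (hP : ∀ x ∈ P, D x ∈ P) (hQ : ∀ y ∈ Q, D y ∈ Q) {z : A} (hz : z ∈ P * Q) :
    D z ∈ P * Q := by
  refine Submodule.mul_induction_on hz (fun x hx y hy => ?_) fun z z' hz hz' => ?_
  · rw [leibniz, smul_eq_mul, smul_eq_mul, mul_comm y]
    exact add_mem (Submodule.mul_mem_mul hx (hQ y hy)) (Submodule.mul_mem_mul (hP x hx) hy)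
  · rw [map_add]
    exact add_mem hz hz'

theorem map_mem_pow (hP : ∀ x ∈ P, D x ∈ P) (k : ℕ) {z : A} (hz : z ∈ P ^ k) : D z ∈ P ^ k := by
  induction k generalizing z with
  | zero =>
    obtain ⟨r, rfl⟩ := Submodule.mem_one.mp hz
    rw [map_algebraMap]
    exact zero_mem _
  | succ k ih => exact D.map_mem_mul (fun x hx => ih hx) hP hz

end Derivation

namespace MvPolynomial

variable {R σ : Type*} [CommSemiring R]

theorem one_mem_restrictDegree (k : ℕ) : (1 : MvPolynomial σ R) ∈ restrictDegree σ R k := by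
  rw [← C_1, ← monomial_zero', restrictDegree, monomial_mem_restrictSupport]
  simp

theorem restrictDegree_mul_le (a b : ℕ) :
    restrictDegree σ R a * restrictDegree σ R b ≤ restrictDegree σ R (a + b) := by
  rw [restrictDegree, restrictDegree, ← restrictSupport_add]
  apply restrictSupport_mono
  rintro _ ⟨s, hs, t, ht, rfl⟩ i
  exact add_le_add (hs i) (ht i)

noncomputable def boundedExponentsEquiv [Finite σ] (k : ℕ) :
    ↥{s : σ →₀ ℕ | ∀ i, s i ≤ k} ≃ (σ → Fin (k + 1)) where
  toFun s i := ⟨s.1 i, Nat.lt_succ_of_le (s.2 i)⟩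
  invFun f := ⟨Finsupp.equivFunOnFinite.symm fun i => f i,
    fun i => by simpa using Nat.le_of_lt_succ (f i).2⟩
  left_inv s := by ext; simp
  right_inv f := by ext; simp

theorem finrank_restrictDegree [Fintype σ] (K : Type*) [Field K] (k : ℕ) :
    Module.finrank K (restrictDegree σ K k) = (k + 1) ^ Fintype.card σ := by
  rw [restrictDegree, Module.finrank_eq_nat_card_basis (basisRestrictSupport K _),
    Nat.card_congr (boundedExponentsEquiv k), Nat.card_fun, Nat.card_eq_fintype_card (α := σ),
    Nat.card_eq_fintype_card, Fintype.card_fin]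

instance [Finite σ] (d : ℕ) : Module.Finite R ↥(homogeneousSubmodule σ R d) :=
  Module.Finite.iff_fg.mpr (homogeneousSubmodule_fg σ R d)

theorem IsHomogeneous.X_mul_pderiv {φ : MvPolynomial σ R} {d : ℕ} (h : φ.IsHomogeneous d)
    (i j : σ) : (X i * pderiv j φ).IsHomogeneous d := by
  obtain _ | d := d
  · rw [← totalDegree_zero_iff_isHomogeneous, totalDegree_eq_zero_iff_eq_C] at h
    rw [h, pderiv_C, mul_zero]
    exact isHomogeneous_zero σ R _
  · simpa [add_comm] using (isHomogeneous_X R i).mul h.pderiv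

end MvPolynomial

section DegOneSpan

variable {R A ι : Type*} [CommSemiring R] [CommSemiring A] [Algebra R A]

/-- Its `k`-th power is spanned by the monomials of degree `≤ k` in the `b i`. -/
def degOneSpan (R : Type*) [CommSemiring R] [Algebra R A] (b : ι → A) : Submodule R A :=
  Submodule.span R (insert 1 (Set.range b))

variable (b : ι → A)

theorem one_le_degOneSpan : 1 ≤ degOneSpan R b :=
  Submodule.one_le.mpr (Submodule.subset_span (Set.mem_insert 1 _))

theorem apply_mem_degOneSpan (i : ι) : b i ∈ degOneSpan R b :=
  Submodule.subset_span (Set.mem_insert_of_mem 1 ⟨i, rfl⟩)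

theorem degOneSpan_le_map_restrictDegree :
    degOneSpan R b ≤ (restrictDegree ι R 1).map (aeval b).toLinearMap := by
  classical
  refine Submodule.span_le.mpr (Set.insert_subset ⟨1, one_mem_restrictDegree 1, by simp⟩ ?_)
  rintro _ ⟨i, rfl⟩
  refine ⟨X i, ?_, aeval_X b i⟩
  rw [SetLike.mem_coe, X, restrictDegree, monomial_mem_restrictSupport]
  left
  intro j
  rw [Finsupp.single_apply]
  split <;> omega

theorem degOneSpan_pow_le_map_restrictDegree (k : ℕ) :
    degOneSpan R b ^ k ≤ (restrictDegree ι R k).map (aeval b).toLinearMap := by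
  induction k with
  | zero =>
    rw [pow_zero, Submodule.one_le]
    exact ⟨1, one_mem_restrictDegree 0, by simp⟩
  | succ k ih =>
    calc degOneSpan R b ^ (k + 1) = degOneSpan R b ^ k * degOneSpan R b := pow_succ _ _
      _ ≤ (restrictDegree ι R k).map (aeval b).toLinearMap *
            (restrictDegree ι R 1).map (aeval b).toLinearMap :=
        mul_le_mul' ih (degOneSpan_le_map_restrictDegree b)
      _ = (restrictDegree ι R k * restrictDegree ι R 1).map (aeval b).toLinearMap :=
        (Submodule.map_mul _ _ (aeval b)).symm
      _ ≤ (restrictDegree ι R (k + 1)).map (aeval b).toLinearMap :=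
        Submodule.map_mono (restrictDegree_mul_le k 1)

theorem map_restrictDegree_le_degOneSpan_pow [Fintype ι] (q : ℕ) :
    (restrictDegree ι R q).map (aeval b).toLinearMap ≤ degOneSpan R b ^ (Fintype.card ι * q) := by
  rw [restrictDegree, restrictSupport_eq_span, Submodule.map_span, Submodule.span_le]
  rintro _ ⟨_, ⟨s, hs, rfl⟩, rfl⟩
  have hsum : ∑ i, s i ≤ Fintype.card ι * q := by
    simpa using Finset.sum_le_card_nsmul Finset.univ s q fun i _ => hs i
  have hmem := Submodule.prod_pow_mem_pow (degOneSpan R b) Finset.univ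
    (fun i _ => apply_mem_degOneSpan b i) s
  simp only [AlgHom.toLinearMap_apply, aeval_monomial, map_one, one_mul,
    Finsupp.prod_fintype _ _ fun i => pow_zero (b i)]
  exact pow_le_pow_right' (one_le_degOneSpan b) hsum hmem

theorem Derivation.map_mem_degOneSpan {R A : Type*} [CommRing R] [CommRing A] [Algebra R A]
    (D : Derivation R A A) {b : ι → A} (hb : ∀ i, D (b i) ∈ degOneSpan R b) {x : A}
    (hx : x ∈ degOneSpan R b) : D x ∈ degOneSpan R b := by
  induction hx using Submodule.span_induction with
  | mem x hx =>
    obtain rfl | ⟨i, rfl⟩ := hx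
    · rw [D.map_one_eq_zero]
      exact zero_mem _
    · exact hb i
  | zero => rw [map_zero]; exact zero_mem _
  | add x y _ _ hx hy => rw [map_add]; exact add_mem hx hy
  | smul c x _ hx => rw [map_smul]; exact Submodule.smul_mem _ c hx

end DegOneSpan

section FinrankDegOneSpan

variable {K A ι : Type*} [Field K] [CommRing A] [Algebra K A] [Fintype ι] (b : ι → A)

instance (k : ℕ) : FiniteDimensional K ↥(degOneSpan K b ^ k) :=
  Module.Finite.iff_fg.mpr <| Submodule.FG.pow
    (Submodule.fg_span ((Set.finite_range b).insert 1)) k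

theorem finrank_degOneSpan_pow_le (k : ℕ) :
    Module.finrank K ↥(degOneSpan K b ^ k) ≤ (k + 1) ^ Fintype.card ι :=
  calc Module.finrank K ↥(degOneSpan K b ^ k)
      ≤ Module.finrank K ↥((restrictDegree ι K k).map (aeval b).toLinearMap) :=
        Submodule.finrank_mono (degOneSpan_pow_le_map_restrictDegree b k)
    _ ≤ Module.finrank K ↥(restrictDegree ι K k) := Submodule.finrank_map_le _ _
    _ = (k + 1) ^ Fintype.card ι := finrank_restrictDegree K k

theorem le_finrank_degOneSpan_pow (hb : AlgebraicIndependent K b) (k : ℕ) :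
    (k / Fintype.card ι + 1) ^ Fintype.card ι ≤ Module.finrank K ↥(degOneSpan K b ^ k) := by
  set q := k / Fintype.card ι
  calc (q + 1) ^ Fintype.card ι = Module.finrank K ↥(restrictDegree ι K q) :=
        (finrank_restrictDegree K q).symm
    _ = Module.finrank K ↥((restrictDegree ι K q).map (aeval b).toLinearMap) :=
        ((restrictDegree ι K q).equivMapOfInjective _
          (algebraicIndependent_iff_injective_aeval.mp hb)).finrank_eq
    _ ≤ Module.finrank K ↥(degOneSpan K b ^ (Fintype.card ι * q)) :=
        Submodule.finrank_mono (map_restrictDegree_le_degOneSpan_pow b q)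
    _ ≤ Module.finrank K ↥(degOneSpan K b ^ k) :=
        Submodule.finrank_mono (pow_le_pow_right' (one_le_degOneSpan b) (Nat.mul_div_le k _))

end FinrankDegOneSpan

section Wk

variable {n : ℕ} {S : Set (Module.End ℝ (MvPolynomial (Fin n ⊕ Fin n) ℝ))}
  {v : MvPolynomial (Fin n ⊕ Fin n) ℝ}

theorem Wk_mono : Monotone (Wk n S v) := fun _ _ hkl =>
  Submodule.span_mono fun _ ⟨l, hl, hS, hf⟩ => ⟨l, hl.trans hkl, hS, hf⟩

theorem self_mem_Wk (k : ℕ) : v ∈ Wk n S v k :=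
  Submodule.subset_span ⟨[], Nat.zero_le k, by simp, by simp⟩

theorem apply_mem_Wk {T : Module.End ℝ (MvPolynomial (Fin n ⊕ Fin n) ℝ)} (hT : T ∈ S) {k : ℕ}
    {f : MvPolynomial (Fin n ⊕ Fin n) ℝ} (hf : f ∈ Wk n S v k) : T f ∈ Wk n S v (k + 1) := by
  suffices Wk n S v k ≤ (Wk n S v (k + 1)).comap T from this hf
  refine Submodule.span_le.mpr ?_
  rintro _ ⟨l, hl, hS, rfl⟩
  refine Submodule.subset_span ⟨T :: l, Nat.succ_le_succ hl, ?_, rfl⟩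
  simpa [hT] using hS

theorem Wk_le_of_forall_mem {M : ℕ → Submodule ℝ (MvPolynomial (Fin n ⊕ Fin n) ℝ)}
    (hM : Monotone M) (hv : v ∈ M 0) (hS : ∀ T ∈ S, ∀ k, ∀ f ∈ M k, T f ∈ M (k + 1)) (k : ℕ) :
    Wk n S v k ≤ M k := by
  have hprod : ∀ l : List _, (∀ T ∈ l, T ∈ S) → l.prod v ∈ M l.length := by
    intro l hl
    induction l with
    | nil => simpa using hv
    | cons T l ih =>
      simpa using hS T (hl T List.mem_cons_self) _ _ (ih fun T' hT' => hl T' (.tail _ hT'))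
  refine Submodule.span_le.mpr ?_
  rintro _ ⟨l, hlk, hl, rfl⟩
  exact hM hlk (hprod l hl)

end Wk

section Oscillator

variable {p : ℕ}

open Sum

-- `p = n - 1`, so that `xₙ, yₙ` are the variables indexed by `Fin.last p`.
abbrev OscPoly (p : ℕ) : Type := MvPolynomial (Fin (p + 1) ⊕ Fin (p + 1)) ℝ

noncomputable def negRootPoly (p : ℕ) (i : Fin p) : OscPoly p :=
  -(X (inl i.castSucc) * X (inl (Fin.last p))) + X (inr i.castSucc) * X (inr (Fin.last p))

noncomputable def negRootDerivation (i r : Fin (p + 1)) : Derivation ℝ (OscPoly p) (OscPoly p) :=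
  -((X (inl i) : OscPoly p) • pderiv (inl r) + (X (inr i) : OscPoly p) • pderiv (inr r))

theorem negRootDerivation_apply (i r : Fin (p + 1)) (f : OscPoly p) :
    negRootDerivation i r f = -(X (inl i) * pderiv (inl r) f + X (inr i) * pderiv (inr r) f) := by
  simp [negRootDerivation]

theorem negRootDerivation_negRootPoly (i r j : Fin p) :
    negRootDerivation i.castSucc r.castSucc (negRootPoly p j) =
      if j = r then -negRootPoly p i else 0 := by
  have hr : Fin.last p ≠ r.castSucc := (Fin.castSucc_lt_last r).ne'
  split_ifs with hj
  · subst hj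
    simp [negRootDerivation_apply, negRootPoly, pderiv_X, hr]
  · simp [negRootDerivation_apply, negRootPoly, pderiv_X, hr, hj]

theorem negRootDerivation_mem_degOneSpan (i r : Fin p) {f : OscPoly p}
    (hf : f ∈ degOneSpan ℝ (negRootPoly p)) :
    negRootDerivation i.castSucc r.castSucc f ∈ degOneSpan ℝ (negRootPoly p) := by
  refine Derivation.map_mem_degOneSpan _ (fun j => ?_) hf
  rw [negRootDerivation_negRootPoly]
  split_ifs
  · exact neg_mem (apply_mem_degOneSpan _ i)
  · exact zero_mem _

theorem negRootDerivation_mem_homogeneousSubmodule (i r : Fin (p + 1)) {d : ℕ} {f : OscPoly p}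
    (hf : f ∈ homogeneousSubmodule (Fin (p + 1) ⊕ Fin (p + 1)) ℝ d) :
    negRootDerivation i r f ∈ homogeneousSubmodule (Fin (p + 1) ⊕ Fin (p + 1)) ℝ d := by
  rw [mem_homogeneousSubmodule] at hf ⊢
  rw [negRootDerivation_apply]
  exact ((hf.X_mul_pderiv _ _).add (hf.X_mul_pderiv _ _)).neg

theorem Sset_cases (h : 2 ≤ p + 1) {T : Module.End ℝ (OscPoly p)} (hT : T ∈ Sset (p + 1) h) :
    (∃ i r : Fin p, ∀ f, T f = negRootDerivation i.castSucc r.castSucc f) ∨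
      ∃ i : Fin p, ∀ f, T f = negRootPoly p i * f := by
  rcases hT with ⟨i, r, hir, hr, rfl⟩ | ⟨i, hi, rfl⟩
  · obtain ⟨r, rfl⟩ :=
      Fin.exists_castSucc_eq.mpr (Fin.ne_of_val_ne (by simp; omega) : r ≠ Fin.last p)
    obtain ⟨i, rfl⟩ := Fin.exists_castSucc_eq.mpr (hir.trans (Fin.castSucc_lt_last r)).ne
    refine .inl ⟨i, r, fun f => ?_⟩
    simp [negRootDerivation_apply, mulE, pdE]
    ring
  · obtain ⟨i, rfl⟩ :=
      Fin.exists_castSucc_eq.mpr (Fin.ne_of_val_ne (by simp; omega) : i ≠ Fin.last p)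
    refine .inr ⟨i, fun f => ?_⟩
    simp [negRootPoly, mulE, Fin.last]
    ring

theorem mulE_negRootPoly_mem_Sset (h : 2 ≤ p + 1) (i : Fin p) :
    mulE (negRootPoly p i) ∈ Sset (p + 1) h := by
  refine .inr ⟨i.castSucc, by simp, LinearMap.ext fun f => ?_⟩
  simp [negRootPoly, mulE, Fin.last]
  ring

/-- The substitution `xᵢ ↦ Xᵢ`, `xₙ ↦ -1`, `yⱼ ↦ 0` sends `negRootPoly p i` to `Xᵢ`. -/
theorem algebraicIndependent_negRootPoly : AlgebraicIndependent ℝ (negRootPoly p) := by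
  refine AlgebraicIndependent.of_comp
    (aeval (Sum.elim (Fin.lastCases (-1) X) 0) : OscPoly p →ₐ[ℝ] MvPolynomial (Fin p) ℝ) ?_
  convert algebraicIndependent_X (Fin p) ℝ
  ext1 i
  simp [negRootPoly]

variable (h : 2 ≤ p + 1) {v : OscPoly p}

theorem Wk_le_degOneSpan_pow_mul {d : ℕ}
    (hv : v ∈ homogeneousSubmodule (Fin (p + 1) ⊕ Fin (p + 1)) ℝ d) (k : ℕ) :
    Wk (p + 1) (Sset (p + 1) h) v k ≤
      degOneSpan ℝ (negRootPoly p) ^ k * homogeneousSubmodule (Fin (p + 1) ⊕ Fin (p + 1)) ℝ d := by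
  have hmono : Monotone fun k =>
      degOneSpan ℝ (negRootPoly p) ^ k * homogeneousSubmodule (Fin (p + 1) ⊕ Fin (p + 1)) ℝ d :=
    fun _ _ hkl => mul_le_mul_left (pow_le_pow_right' (one_le_degOneSpan _) hkl) _
  refine Wk_le_of_forall_mem hmono (by simpa using hv) (fun T hT k f hf => ?_) k
  rcases Sset_cases h hT with ⟨i, r, hT⟩ | ⟨i, hT⟩
  · rw [hT]
    refine hmono k.le_succ (Derivation.map_mem_mul _ (fun x hx => ?_)
      (fun y hy => negRootDerivation_mem_homogeneousSubmodule _ _ hy) hf)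
    exact Derivation.map_mem_pow _ (fun x hx => negRootDerivation_mem_degOneSpan i r hx) k hx
  · rw [hT, pow_succ', mul_assoc]
    exact Submodule.mul_mem_mul (apply_mem_degOneSpan _ i) hf

theorem mul_mem_Wk_succ {x : OscPoly p} (hx : x ∈ degOneSpan ℝ (negRootPoly p)) {k : ℕ}
    {f : OscPoly p} (hf : f ∈ Wk (p + 1) (Sset (p + 1) h) v k) :
    x * f ∈ Wk (p + 1) (Sset (p + 1) h) v (k + 1) := by
  induction hx using Submodule.span_induction with
  | mem x hx =>
    obtain rfl | ⟨i, rfl⟩ := hx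
    · rw [one_mul]
      exact Wk_mono k.le_succ hf
    · exact apply_mem_Wk (mulE_negRootPoly_mem_Sset h i) hf
  | zero => rw [zero_mul]; exact zero_mem _
  | add x y _ _ hx hy => rw [add_mul]; exact add_mem hx hy
  | smul c x _ hx => rw [smul_mul_assoc]; exact Submodule.smul_mem _ c hx

theorem map_degOneSpan_pow_le_Wk (k : ℕ) :
    (degOneSpan ℝ (negRootPoly p) ^ k).map (LinearMap.mulRight ℝ v) ≤
      Wk (p + 1) (Sset (p + 1) h) v k := by
  rw [Submodule.map_le_iff_le_comap]
  induction k with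
  | zero =>
    rw [pow_zero, Submodule.one_le]
    simpa using self_mem_Wk 0
  | succ k ih =>
    rw [pow_succ', Submodule.mul_le]
    intro x hx y hy
    simpa [mul_assoc] using mul_mem_Wk_succ h hx (ih hy)

theorem finrank_Wk_le {d : ℕ} (hv : v ∈ homogeneousSubmodule (Fin (p + 1) ⊕ Fin (p + 1)) ℝ d)
    (k : ℕ) :
    Module.finrank ℝ ↥(Wk (p + 1) (Sset (p + 1) h) v k) ≤
      (k + 1) ^ p * Module.finrank ℝ ↥(homogeneousSubmodule (Fin (p + 1) ⊕ Fin (p + 1)) ℝ d) :=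
  calc Module.finrank ℝ ↥(Wk (p + 1) (Sset (p + 1) h) v k)
      ≤ Module.finrank ℝ ↥(degOneSpan ℝ (negRootPoly p) ^ k *
          homogeneousSubmodule (Fin (p + 1) ⊕ Fin (p + 1)) ℝ d) :=
        Submodule.finrank_mono (Wk_le_degOneSpan_pow_mul h hv k)
    _ ≤ Module.finrank ℝ ↥(degOneSpan ℝ (negRootPoly p) ^ k) *
          Module.finrank ℝ ↥(homogeneousSubmodule (Fin (p + 1) ⊕ Fin (p + 1)) ℝ d) :=
        Submodule.finrank_mul_le _ _
    _ ≤ (k + 1) ^ p *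
          Module.finrank ℝ ↥(homogeneousSubmodule (Fin (p + 1) ⊕ Fin (p + 1)) ℝ d) := by
        simpa using Nat.mul_le_mul_right _ (finrank_degOneSpan_pow_le (negRootPoly p) k)

theorem le_finrank_Wk (hv₀ : v ≠ 0) {d : ℕ}
    (hv : v ∈ homogeneousSubmodule (Fin (p + 1) ⊕ Fin (p + 1)) ℝ d) (k : ℕ) :
    (k / p + 1) ^ p ≤ Module.finrank ℝ ↥(Wk (p + 1) (Sset (p + 1) h) v k) := by
  have : Module.Finite ℝ ↥(Wk (p + 1) (Sset (p + 1) h) v k) :=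
    Submodule.finiteDimensional_of_le (Wk_le_degOneSpan_pow_mul h hv k)
  calc (k / p + 1) ^ p ≤ Module.finrank ℝ ↥(degOneSpan ℝ (negRootPoly p) ^ k) := by
        simpa using le_finrank_degOneSpan_pow (negRootPoly p) algebraicIndependent_negRootPoly k
    _ = Module.finrank ℝ ↥((degOneSpan ℝ (negRootPoly p) ^ k).map (LinearMap.mulRight ℝ v)) :=
        (Submodule.equivMapOfInjective _ (mul_left_injective₀ hv₀) _).finrank_eq
    _ ≤ Module.finrank ℝ ↥(Wk (p + 1) (Sset (p + 1) h) v k) :=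
        Submodule.finrank_mono (map_degOneSpan_pow_le_Wk h k)

end Oscillator

theorem exists_pow_bounds_of_nat_bounds {f : ℕ → ℕ} {p C : ℕ} (hp : 0 < p)
    (hlow : ∀ k, (k / p + 1) ^ p ≤ f k) (hup : ∀ k, f k ≤ (k + 1) ^ p * C) :
    ∃ c₁ c₂ : ℝ, 0 < c₁ ∧ 0 < c₂ ∧ ∃ K : ℕ, ∀ k ≥ K,
      c₁ * (k : ℝ) ^ p ≤ f k ∧ (f k : ℝ) ≤ c₂ * (k : ℝ) ^ p := by
  have hC : 1 ≤ C := by simpa using (hlow 0).trans (hup 0)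
  refine ⟨(p : ℝ)⁻¹ ^ p, 2 ^ p * C, by positivity, by positivity, 1, fun k hk => ⟨?_, ?_⟩⟩
  · have hdiv : (k : ℝ) / p ≤ (k / p : ℕ) + 1 := by
      rw [div_le_iff₀ (by positivity), add_one_mul]
      exact_mod_cast (Nat.lt_div_mul_add (a := k) hp).le
    calc (p : ℝ)⁻¹ ^ p * (k : ℝ) ^ p = ((k : ℝ) / p) ^ p := by rw [← mul_pow, inv_mul_eq_div]
      _ ≤ (((k / p : ℕ) : ℝ) + 1) ^ p := pow_le_pow_left₀ (by positivity) hdiv p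
      _ ≤ f k := by exact_mod_cast hlow k
  · have hk1 : (k : ℝ) + 1 ≤ 2 * k := by
      have : (1 : ℝ) ≤ k := by exact_mod_cast hk
      linarith
    calc (f k : ℝ) ≤ ((k : ℝ) + 1) ^ p * C := by exact_mod_cast hup k
      _ ≤ (2 * (k : ℝ)) ^ p * C := by gcongr
      _ = 2 ^ p * C * (k : ℝ) ^ p := by ring

theorem zeta1_isHomogeneous (n : ℕ) (hn : 3 ≤ n) : (zeta1 n hn).IsHomogeneous 2 :=
  ((isHomogeneous_X ℝ _).mul (isHomogeneous_X ℝ _)).sub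
    ((isHomogeneous_X ℝ _).mul (isHomogeneous_X ℝ _))

theorem zeta1_ne_zero (n : ℕ) (hn : 3 ≤ n) : zeta1 n hn ≠ 0 := by
  classical
  intro h0
  have := congrArg (eval (Sum.elim 1 fun i : Fin n => if i.val = n - 2 then 1 else 0)) h0
  simp [zeta1, show n - 3 ≠ n - 2 by omega] at this

/-- `v = x_{n−1}^{m₁} ζ₁^{m₂+1}`, with the 0-based index `n - 2` for `x_{n−1}`. -/
theorem stmt_15 (n m₁ m₂ : ℕ) (hn : 3 ≤ n) :
    ∃ c₁ c₂ : ℝ, 0 < c₁ ∧ 0 < c₂ ∧ ∃ K : ℕ, ∀ k ≥ K,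
      c₁ * (k : ℝ) ^ (n - 1) ≤
        (Module.finrank ℝ (Wk n (Sset n (by omega))
          (X (Sum.inl (⟨n - 2, by omega⟩ : Fin n)) ^ m₁ * zeta1 n hn ^ (m₂ + 1)) k) : ℝ) ∧
      (Module.finrank ℝ (Wk n (Sset n (by omega))
          (X (Sum.inl (⟨n - 2, by omega⟩ : Fin n)) ^ m₁ * zeta1 n hn ^ (m₂ + 1)) k) : ℝ) ≤
        c₂ * (k : ℝ) ^ (n - 1) := by
  obtain ⟨p, rfl⟩ : ∃ p, n = p + 1 := ⟨n - 1, by omega⟩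
  have hv₀ : X (Sum.inl (⟨p + 1 - 2, by omega⟩ : Fin (p + 1))) ^ m₁ * zeta1 (p + 1) hn ^ (m₂ + 1)
      ≠ 0 := mul_ne_zero (pow_ne_zero _ (X_ne_zero _)) (pow_ne_zero _ (zeta1_ne_zero _ hn))
  have hv := ((isHomogeneous_X ℝ (Sum.inl (⟨p + 1 - 2, by omega⟩ : Fin (p + 1)))).pow m₁).mul
    ((zeta1_isHomogeneous _ hn).pow (m₂ + 1))
  rw [← mem_homogeneousSubmodule] at hv
  rw [Nat.add_sub_cancel]
  exact exists_pow_bounds_of_nat_bounds (by omega) (le_finrank_Wk (by omega) hv₀ hv)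
    (finrank_Wk_le (by omega) hv)
end
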